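/- Let d ∈ ℕ, τ ∈ ℝ, σ, γ, λ > 0 and θ > 1. There exists C ≥ 1, depending only on (d, θ), such that P_Mon,d(σ) ∩ P_Reg,d(τ, θ, γ, λ) ⊆ P_Mon,d(σ) ∩ P_Mar,d(τ, γ, λ/C^γ). -/

import Mathlib

open MeasureTheory ProbabilityTheory Real Set
open scoped ENNReal Classical

noncomputable section

/-- `log_+ x := log (x ∨ e)`. -/
def logp (x : ℝ) : ℝ := Real.log (max x (Real.exp 1))

/-- The σ-algebra generated by the covariate `X = Prod.fst`. -/
def mX (d : ℕ) : MeasurableSpace ((Fin d → ℝ) × ℝ) :=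
  MeasurableSpace.comap Prod.fst inferInstance

/-- `η` is (a version of) the regression function `x ↦ E[Y | X = x]` of `P`. -/
def IsRegFn (d : ℕ) (P : Measure ((Fin d → ℝ) × ℝ)) (η : (Fin d → ℝ) → ℝ) : Prop :=
  Measurable η ∧ (fun p => η p.1) =ᵐ[P] P[fun p => p.2 | mX d]

/-- Conditionally on `X`, `Y - η X` is sub-Gaussian with variance parameter `σ²`. -/
def CondSubG (d : ℕ) (σ : ℝ) (P : Measure ((Fin d → ℝ) × ℝ)) (η : (Fin d → ℝ) → ℝ) : Prop :=
  ∀ t : ℝ, Integrable (fun p => Real.exp (t * (p.2 - η p.1))) P ∧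
    (P[fun p => Real.exp (t * (p.2 - η p.1)) | mX d])
      ≤ᵐ[P] fun _ => Real.exp (σ ^ 2 * t ^ 2 / 2)

/-- The class `P_{Mon,d}(σ)`, as a predicate on the pair `(P, η)`. -/
def PMon (d : ℕ) (σ : ℝ) (P : Measure ((Fin d → ℝ) × ℝ)) (η : (Fin d → ℝ) → ℝ) : Prop :=
  IsProbabilityMeasure P ∧ IsRegFn d P η ∧ Monotone η ∧ CondSubG d σ P η

/-- The margin class `P_{Mar,d}(τ, β, ν)`, as a predicate on the pair `(P, η)`. -/
def PMar (d : ℕ) (τ β ν : ℝ) (P : Measure ((Fin d → ℝ) × ℝ)) (η : (Fin d → ℝ) → ℝ) : Prop :=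
  IsProbabilityMeasure P ∧ IsRegFn d P η ∧
    ∀ ξ : ℝ, ξ ∈ Set.Ioc (0 : ℝ) 1 →
      (P.map Prod.fst) (η ⁻¹' Set.Icc τ (τ + ν * ξ ^ β)) ≤ ENNReal.ofReal ξ

/-- Support of a Borel measure: the points all of whose open neighbourhoods have
positive measure. -/
def measSupport {α : Type*} [TopologicalSpace α] [MeasurableSpace α] (μ : Measure α) : Set α :=
  {x | ∀ U : Set α, IsOpen U → x ∈ U → 0 < μ U}

/-- The regularity class `P_{Reg,d}(τ, θ, γ, λ)`, as a predicate on the pair `(P, η)`. -/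
def PReg (d : ℕ) (τ θ γ lam : ℝ) (P : Measure ((Fin d → ℝ) × ℝ)) (η : (Fin d → ℝ) → ℝ) : Prop :=
  IsProbabilityMeasure P ∧ IsRegFn d P η ∧
    ∀ x ∈ {x | τ ≤ η x} ∩ measSupport (P.map Prod.fst), ∀ r : ℝ, r ∈ Set.Ioc (0:ℝ) 1 →
      (ENNReal.ofReal (θ⁻¹ * r ^ d) ≤ (P.map Prod.fst) (Metric.closedBall x r) ∧
        (P.map Prod.fst) (Metric.closedBall x r) ≤ ENNReal.ofReal (θ * (2 * r) ^ d)) ∧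
      (Metric.closedBall x r ∩ {z | τ + lam * r ^ γ ≤ η z}).Nonempty

/-- Indices `i` with `X i ≼ x`, ordered by increasing sup-norm distance to `x`,
ties broken by the original index ordering. -/
def nnOrder {d n : ℕ} (X : Fin n → (Fin d → ℝ)) (x : Fin d → ℝ) : List (Fin n) :=
  List.insertionSort
    (fun i j => ‖X i - x‖ < ‖X j - x‖ ∨ (‖X i - x‖ = ‖X j - x‖ ∧ i ≤ j))
    ((List.finRange n).filter (fun i => decide (X i ≤ x)))

/-- The martingale sums `S_k = ∑_{j=1}^k (Y_{(j)}(x) - τ)/σ`. -/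
def Smart {d n : ℕ} (σ τ : ℝ) (D : Fin n → (Fin d → ℝ) × ℝ) (x : Fin d → ℝ) (k : ℕ) : ℝ :=
  ((((nnOrder (fun i => (D i).1) x).take k).map (fun i => ((D i).2 - τ) / σ)).sum)

/-- The anytime-valid martingale p-value `p̂_{σ,τ}(x, D)`. -/
def phat {d n : ℕ} (σ τ : ℝ) (D : Fin n → (Fin d → ℝ) × ℝ) (x : Fin d → ℝ) : ℝ :=
  ((List.range (nnOrder (fun i => (D i).1) x).length).map (fun k =>
      5.2 * Real.exp (-(max (Smart σ τ D x (k + 1)) 0) ^ 2 / (2.0808 * (k + 1))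
        + Real.log (Real.log (2 * (k + 1))) / 0.72))).foldr min 1

/-- One iteration of the DAG testing procedure `R^ISS`. Edges point from parents to children:
`E a b` means `a` is a parent of `b`; `F` is the weight-one (polyforest) subrelation. -/
def RISSstep {I : Type*} [Fintype I] (E F : I → I → Prop) (α : ℝ) (p : I → ℝ)
    (R : Finset I) : Finset I :=
  let SL : Finset I := Finset.univ.filter (fun i => (∀ j, ¬ F i j) ∧ i ∉ R)
  let SC : Finset I := Finset.univ.filter (fun i => i ∉ R ∧ ∀ j, F j i → j ∈ R)
  let budget : I → ℝ := fun i =>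
    if i ∈ SC then
      ((SL.filter (fun j => j = i ∨ Relation.TransGen F i j)).card : ℝ) * α / (SL.card : ℝ)
    else 0
  let Il : Finset I := Finset.univ.filter (fun i => p i ≤ budget i)
  if Il = ∅ then R
  else R ∪ Il ∪ Finset.univ.filter (fun i => ∃ j ∈ Il, Relation.TransGen E i j)

/-- The DAG testing procedure `R^ISS_α` applied to a polyforest-weighted DAG `(I, E, w)`
(represented by the edge relation `E` and the weight-one subrelation `F`) and p-values `p`. -/
def RISS {I : Type*} [Fintype I] (E F : I → I → Prop) (α : ℝ) (p : I → ℝ) : Finset I :=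
  (RISSstep E F α p)^[Fintype.card I] ∅

/-- Edge relation of the DAG induced by the covariate points `z`. -/
def indE {d m : ℕ} (z : Fin m → (Fin d → ℝ)) (i0 i1 : Fin m) : Prop :=
  i0 ≠ i1 ∧ z i1 ≤ z i0 ∧ ∀ i2, z i1 ≤ z i2 → z i2 ≤ z i0 →
    (z i2 = z i0 ∧ i0 ≤ i2) ∨ (z i2 = z i1 ∧ i2 ≤ i1)

/-- Edge relation of the induced polyforest: among the induced-DAG parents of `i1`, keep the one
of minimal sup-norm distance to `z i1`, ties broken by smallest index. -/
def indF {d m : ℕ} (z : Fin m → (Fin d → ℝ)) (i0 i1 : Fin m) : Prop :=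
  indE z i0 i1 ∧ ∀ i, indE z i i1 →
    (‖z i0 - z i1‖ < ‖z i - z i1‖ ∨ (‖z i0 - z i1‖ = ‖z i - z i1‖ ∧ i0 ≤ i))

/-- The selection set `Â^{ISS}_{σ,τ,α,m}(D)`: the upper hull of the covariate points (among the
first `m` data points) whose hypotheses are rejected by `R^ISS` applied to the induced
polyforest-weighted DAG of `(X_1, …, X_m)` and the martingale p-values `p̂_{σ,τ}(X_i, D)`. -/
def AISS {d n : ℕ} (σ τ α : ℝ) (m : ℕ) (hm : m ≤ n)
    (D : Fin n → (Fin d → ℝ) × ℝ) : Set (Fin d → ℝ) :=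
  let z : Fin m → (Fin d → ℝ) := fun i => (D (Fin.castLE hm i)).1
  {x | ∃ i ∈ RISS (indE z) (indF z) α (fun i => phat σ τ D (z i)), z i ≤ x}

/-- `A` is a valid data-dependent selection set at level `α` for the class `PC`:
it is jointly measurable and satisfies the Type I error guarantee over `PC`. -/
def SelValid (d n : ℕ) (τ α : ℝ)
    (PC : Measure ((Fin d → ℝ) × ℝ) → ((Fin d → ℝ) → ℝ) → Prop)
    (A : (Fin n → (Fin d → ℝ) × ℝ) → Set (Fin d → ℝ)) : Prop :=
  MeasurableSet {q : (Fin n → (Fin d → ℝ) × ℝ) × (Fin d → ℝ) | q.2 ∈ A q.1} ∧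
  ∀ P η, PC P η →
    ENNReal.ofReal (1 - α) ≤ (Measure.pi fun _ : Fin n => P) {ω | A ω ⊆ {x | τ ≤ η x}}

end

/-!
Fix `ξ ∈ (0, 1]`, put `C = 44^d θ²`, `r = 2ξ / C` and let `A` be the part of the band
`{τ ≤ η ≤ τ + λ (ξ / C)^γ}` lying in the support of `μ = P_X`. The regularity condition gives, near
every `x ∈ A`, a point where `η ≥ τ + λ r^γ`, which exceeds the top of the band; by monotonicity no
point of `A` dominates another point of `A` by `r` in every coordinate. Hence in the grid of cubes of
side `r`, each diagonal line `k + ℤ • (1, …, 1)` meets at most two cubes that contain points of `A`.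
The lower mass bound `μ(B(x, 1)) ≥ θ⁻¹` covers `A` by at most `θ` cubes of side `4`, each of which
meets at most `2 (11 / r)^(d-1)` such cubes, and each of these has mass at most `θ (2r)^d`.
Altogether `μ(A) ≤ 4 θ² 22^(d-1) r ≤ ξ`.
-/

open Metric

lemma measSupport_eq_support {α : Type*} [TopologicalSpace α] [MeasurableSpace α]
    (μ : Measure α) : measSupport μ = μ.support := by
  ext x
  simp only [measSupport, Set.mem_ofPred_eq, (nhds_basis_opens x).mem_measureSupport, and_imp]
  exact forall_congr' fun _ => forall_comm

lemma le_of_mem_closedBall_of_forall_add_le {ι : Type*} [Fintype ι] {x y z : ι → ℝ} {r : ℝ}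
    (hz : z ∈ closedBall x r) (hy : ∀ j, x j + r ≤ y j) : z ≤ y := fun j => by
  have := (abs_le.1 (Real.dist_eq _ _ ▸ (dist_le_pi_dist z x j).trans (mem_closedBall.1 hz))).2
  linarith [hy j]

section Packing

variable {α : Type*} [PseudoMetricSpace α] [MeasurableSpace α] [OpensMeasurableSpace α]
  {μ : Measure α} [IsProbabilityMeasure μ] {s : Set α} {θ ε : ℝ}

lemma card_le_of_pairwise_lt_dist (hθ : 0 < θ)
    (hs : ∀ x ∈ s, ENNReal.ofReal θ⁻¹ ≤ μ (closedBall x ε)) {F : Finset α} (hFs : ↑F ⊆ s)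
    (hF : (F : Set α).Pairwise fun a b => 2 * ε < dist a b) : (F.card : ℝ) ≤ θ := by
  have hdisj : (F : Set α).PairwiseDisjoint fun w => closedBall w ε := fun a ha b hb hab =>
    closedBall_disjoint_closedBall (by linarith [hF ha hb hab])
  have hmass : ENNReal.ofReal (F.card * θ⁻¹) ≤ 1 :=
    calc ENNReal.ofReal (F.card * θ⁻¹) = ∑ _w ∈ F, ENNReal.ofReal θ⁻¹ := by
          rw [ENNReal.ofReal_mul (Nat.cast_nonneg _), ENNReal.ofReal_natCast, Finset.sum_const,
            nsmul_eq_mul]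
      _ ≤ ∑ w ∈ F, μ (closedBall w ε) := Finset.sum_le_sum fun w hw => hs w (hFs hw)
      _ = μ (⋃ w ∈ F, closedBall w ε) :=
          (measure_biUnion_finset hdisj fun w _ => measurableSet_closedBall).symm
      _ ≤ 1 := prob_le_one
  rwa [ENNReal.ofReal_le_one, mul_inv_le_iff₀ hθ, one_mul] at hmass

/-- A maximal `2ε`-separated subset of `s` is a `2ε`-net of `s`. -/
lemma exists_finset_card_le_subset_biUnion_closedBall (hθ : 0 < θ) (hε : 0 ≤ ε)
    (hs : ∀ x ∈ s, ENNReal.ofReal θ⁻¹ ≤ μ (closedBall x ε)) :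
    ∃ F : Finset α, (F.card : ℝ) ≤ θ ∧ s ⊆ ⋃ w ∈ F, closedBall w (2 * ε) := by
  let IsPackingCard (n : ℕ) : Prop := ∃ F : Finset α, ↑F ⊆ s ∧
    (F : Set α).Pairwise (fun a b => 2 * ε < dist a b) ∧ F.card = n
  have hle : ∀ n, IsPackingCard n → n ≤ ⌊θ⌋₊ := by
    rintro _ ⟨F, hFs, hF, rfl⟩
    exact Nat.le_floor (card_le_of_pairwise_lt_dist hθ hs hFs hF)
  obtain ⟨F, hFs, hF, hcard⟩ : IsPackingCard (Nat.findGreatest IsPackingCard ⌊θ⌋₊) :=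
    Nat.findGreatest_spec (Nat.zero_le _) ⟨∅, by simp, by simp, rfl⟩
  refine ⟨F, card_le_of_pairwise_lt_dist hθ hs hFs hF, fun x hx => ?_⟩
  by_contra hcov
  simp only [mem_iUnion, mem_closedBall, not_exists, not_le] at hcov
  have hxF : x ∉ F := fun h => by linarith [hcov x h, dist_self x]
  have hins : IsPackingCard (F.card + 1) := by
    refine ⟨insert x F, ?_, ?_, Finset.card_insert_of_notMem hxF⟩
    · simpa [Finset.coe_insert] using insert_subset hx hFs
    · rw [Finset.coe_insert, pairwise_insert]
      exact ⟨hF, fun b hb _ => ⟨hcov b hb, dist_comm x b ▸ hcov b hb⟩⟩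
  have := Nat.le_findGreatest (hle _ hins) hins
  omega

end Packing

noncomputable def cellIndex {ι : Type*} (r : ℝ) (x : ι → ℝ) : ι → ℤ := fun j => ⌊x j / r⌋

section Grid

variable {ι : Type*} {r : ℝ} {x y : ι → ℝ}

lemma dist_le_of_cellIndex_eq [Fintype ι] (hr : 0 < r) (h : cellIndex r x = cellIndex r y) :
    dist x y ≤ r := by
  refine (dist_pi_le_iff hr.le).2 fun j => ?_
  have := Int.abs_sub_lt_one_of_floor_eq_floor (congrFun h j)
  rw [← sub_div, abs_div, abs_of_pos hr, div_lt_one hr] at this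
  exact (Real.dist_eq _ _).trans_le this.le

lemma add_le_of_cellIndex_add_two_le (hr : 0 < r) {j : ι}
    (h : cellIndex r x j + 2 ≤ cellIndex r y j) : x j + r ≤ y j := by
  have hx := Int.lt_floor_add_one (x j / r)
  have hy := Int.floor_le (y j / r)
  have hxy : ((cellIndex r x j : ℤ) : ℝ) + 2 ≤ cellIndex r y j := by exact_mod_cast h
  simp only [cellIndex] at hxy
  have : x j / r + 1 ≤ y j / r := by linarith
  rwa [div_add_one hr.ne', div_le_div_iff_of_pos_right hr] at this

lemma cellIndex_mem_Icc [Fintype ι] (hr : 0 < r) {w : ι → ℝ} {ρ : ℝ} (h : dist x w ≤ ρ) (j : ι) :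
    cellIndex r x j ∈ Icc ⌊(w j - ρ) / r⌋ (⌊(w j - ρ) / r⌋ + ⌈2 * ρ / r⌉₊) := by
  have hj := abs_le.1 (Real.dist_eq _ _ ▸ (dist_le_pi_dist x w j).trans h)
  refine ⟨Int.floor_mono (by gcongr; linarith), Int.floor_le_iff.2 ?_⟩
  have h1 := Int.lt_floor_add_one ((w j - ρ) / r)
  have h2 := Nat.le_ceil (2 * ρ / r)
  have h3 : x j / r ≤ (w j - ρ) / r + 2 * ρ / r := by
    rw [← add_div]; gcongr; linarith
  push_cast
  linarith

lemma measure_inter_preimage_cellIndex_le [Fintype ι] [MeasurableSpace (ι → ℝ)]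
    {μ : Measure (ι → ℝ)} {A : Set (ι → ℝ)} {c : ℝ≥0∞} (hr : 0 < r)
    (hA : ∀ x ∈ A, μ (closedBall x r) ≤ c) (k : ι → ℤ) :
    μ (A ∩ cellIndex r ⁻¹' {k}) ≤ c := by
  rcases (A ∩ cellIndex r ⁻¹' {k}).eq_empty_or_nonempty with hempty | ⟨x, hxA, hxk⟩
  · simp [hempty]
  refine (measure_mono fun y hy => ?_).trans (hA x hxA)
  exact mem_closedBall.2 (dist_le_of_cellIndex_eq hr (hy.2.trans hxk.symm))

end Grid

lemma card_le_of_forall_mem_Icc_of_not_forall_add_two_le {n : ℕ}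
    (O : Finset (Fin (n + 1) → ℤ)) (lo : Fin (n + 1) → ℤ) (L : ℕ)
    (hbox : ∀ k ∈ O, ∀ j, k j ∈ Icc (lo j) (lo j + L))
    (hgap : ∀ k ∈ O, ∀ k' ∈ O, ¬ ∀ j, k j + 2 ≤ k' j) :
    O.card ≤ 2 * (2 * L + 1) ^ n := by
  -- `O` meets each diagonal line `k + ℤ • (1, …, 1)` in at most two consecutive points, so a point
  -- of `O` is determined by its diagonal line and the parity of its first coordinate
  let f : (Fin (n + 1) → ℤ) → ℤ × (Fin n → ℤ) := fun k => (k 0 % 2, fun j => k j.succ - k 0)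
  let T : Finset (ℤ × (Fin n → ℤ)) := Finset.Icc 0 1 ×ˢ
    Fintype.piFinset fun j => Finset.Icc (lo j.succ - lo 0 - L) (lo j.succ - lo 0 + L)
  have hmaps : Set.MapsTo f O T := fun k hk => by
    have hk : ∀ j, lo j ≤ k j ∧ k j ≤ lo j + L := hbox k hk
    simp only [f, T, Finset.coe_product, mem_prod, Finset.mem_coe, Finset.mem_Icc,
      Fintype.mem_piFinset]
    refine ⟨⟨by omega, by omega⟩, fun j => ⟨?_, ?_⟩⟩ <;> linarith [hk 0, hk j.succ]
  have hinj : Set.InjOn f O := fun k hk k' hk' hkk' => by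
    obtain ⟨hpar, hline⟩ := Prod.ext_iff.1 hkk'
    simp only [f] at hpar hline
    have hdiag : ∀ j, k' j = k j + (k' 0 - k 0) :=
      Fin.cases (by omega) fun j => by have := congrFun hline j; omega
    have hlo : ¬ 2 ≤ k' 0 - k 0 := fun h => hgap k hk k' hk' fun j => by rw [hdiag j]; omega
    have hhi : ¬ k' 0 - k 0 ≤ -2 := fun h => hgap k' hk' k hk fun j => by rw [hdiag j]; omega
    funext j
    have := hdiag j
    omega
  calc O.card ≤ T.card := Finset.card_le_card_of_injOn f hmaps hinj
    _ = 2 * (2 * L + 1) ^ n := by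
      simp only [T, Finset.card_product, Fintype.card_piFinset, Int.card_Icc]
      rw [Finset.prod_congr rfl (g := fun _ => 2 * L + 1) fun j _ => by omega, Finset.prod_const,
        Finset.card_univ, Fintype.card_fin]
      rfl

section Band

variable {n : ℕ} {μ : Measure (Fin (n + 1) → ℝ)} {A : Set (Fin (n + 1) → ℝ)} {θ r : ℝ}

lemma measure_inter_closedBall_le_of_not_forall_add_le (hθ : 0 ≤ θ) (hr0 : 0 < r) (hr1 : r ≤ 1)
    (hupper : ∀ x ∈ A, μ (closedBall x r) ≤ ENNReal.ofReal (θ * (2 * r) ^ (n + 1)))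
    (hthin : ∀ x ∈ A, ∀ y ∈ A, ¬ ∀ j, x j + r ≤ y j) (w : Fin (n + 1) → ℝ) :
    μ (A ∩ closedBall w 2) ≤ ENNReal.ofReal (4 * θ * 22 ^ n * r) := by
  set L := ⌈2 * 2 / r⌉₊
  set lo : Fin (n + 1) → ℤ := fun j => ⌊(w j - 2) / r⌋
  let O := (Fintype.piFinset fun j => Finset.Icc (lo j) (lo j + L)).filter
    fun k => ∃ x ∈ A ∩ closedBall w 2, cellIndex r x = k
  have hcover : A ∩ closedBall w 2 ⊆ ⋃ k ∈ O, A ∩ cellIndex r ⁻¹' {k} := fun x hx => by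
    refine mem_iUnion₂.2 ⟨cellIndex r x, Finset.mem_filter.2 ⟨?_, x, hx, rfl⟩, hx.1, rfl⟩
    exact Fintype.mem_piFinset.2 fun j =>
      Finset.mem_Icc.2 (cellIndex_mem_Icc hr0 (mem_closedBall.1 hx.2) j)
  have hcard : O.card ≤ 2 * (2 * L + 1) ^ n := by
    refine card_le_of_forall_mem_Icc_of_not_forall_add_two_le O lo L (fun k hk j => ?_) ?_
    · exact Finset.mem_Icc.1 (Fintype.mem_piFinset.1 (Finset.mem_filter.1 hk).1 j)
    · intro k hk k' hk' hkk'
      obtain ⟨x, hx, rfl⟩ := (Finset.mem_filter.1 hk).2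
      obtain ⟨x', hx', rfl⟩ := (Finset.mem_filter.1 hk').2
      exact hthin x hx.1 x' hx'.1 fun j => add_le_of_cellIndex_add_two_le hr0 (hkk' j)
  have hL : 2 * (L : ℝ) + 1 ≤ 11 / r := by
    have h1 : (L : ℝ) < 2 * 2 / r + 1 := Nat.ceil_lt_add_one (by positivity)
    have h2 : 3 ≤ 3 / r := by rw [le_div_iff₀ hr0]; linarith
    have h3 : 11 / r = 2 * (2 * 2 / r) + 3 / r := by ring
    linarith
  have hcell : 0 ≤ θ * (2 * r) ^ (n + 1) := mul_nonneg hθ (by positivity)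
  have hgrid : (11 / r) ^ n * (2 * r) ^ n = 22 ^ n := by
    rw [← mul_pow, div_mul_eq_mul_div, mul_div_assoc, mul_div_cancel_right₀ _ hr0.ne']
    norm_num
  have hcount : (O.card : ℝ) * (θ * (2 * r) ^ (n + 1)) ≤ 4 * θ * 22 ^ n * r :=
    calc (O.card : ℝ) * (θ * (2 * r) ^ (n + 1))
        ≤ 2 * (11 / r) ^ n * (θ * (2 * r) ^ (n + 1)) := by
          refine mul_le_mul_of_nonneg_right ?_ hcell
          calc (O.card : ℝ) ≤ 2 * (2 * L + 1) ^ n := by exact_mod_cast hcard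
            _ ≤ 2 * (11 / r) ^ n := by gcongr
      _ = 2 * θ * ((11 / r) ^ n * (2 * r) ^ n) * (2 * r) := by ring
      _ = 4 * θ * 22 ^ n * r := by rw [hgrid]; ring
  calc μ (A ∩ closedBall w 2) ≤ ∑ k ∈ O, μ (A ∩ cellIndex r ⁻¹' {k}) :=
        (measure_mono hcover).trans (measure_biUnion_finset_le _ _)
    _ ≤ ∑ _k ∈ O, ENNReal.ofReal (θ * (2 * r) ^ (n + 1)) :=
        Finset.sum_le_sum fun k _ => measure_inter_preimage_cellIndex_le hr0 hupper k
    _ = ENNReal.ofReal (O.card * (θ * (2 * r) ^ (n + 1))) := by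
        rw [Finset.sum_const, nsmul_eq_mul, ENNReal.ofReal_mul (Nat.cast_nonneg _),
          ENNReal.ofReal_natCast]
    _ ≤ ENNReal.ofReal (4 * θ * 22 ^ n * r) := ENNReal.ofReal_le_ofReal hcount

lemma measure_le_of_not_forall_add_le [IsProbabilityMeasure μ] (hθ : 0 < θ) (hr0 : 0 < r)
    (hr1 : r ≤ 1) (hlower : ∀ x ∈ A, ENNReal.ofReal θ⁻¹ ≤ μ (closedBall x 1))
    (hupper : ∀ x ∈ A, μ (closedBall x r) ≤ ENNReal.ofReal (θ * (2 * r) ^ (n + 1)))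
    (hthin : ∀ x ∈ A, ∀ y ∈ A, ¬ ∀ j, x j + r ≤ y j) :
    μ A ≤ ENNReal.ofReal (4 * θ ^ 2 * 22 ^ n * r) := by
  obtain ⟨F, hFcard, hAF⟩ :=
    exists_finset_card_le_subset_biUnion_closedBall hθ zero_le_one hlower
  have hcover : A ⊆ ⋃ w ∈ F, A ∩ closedBall w 2 := fun x hx => by
    obtain ⟨w, hw, hxw⟩ := mem_iUnion₂.1 (hAF hx)
    exact mem_iUnion₂.2 ⟨w, hw, hx, by simpa using hxw⟩
  calc μ A ≤ ∑ w ∈ F, μ (A ∩ closedBall w 2) :=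
        (measure_mono hcover).trans (measure_biUnion_finset_le _ _)
    _ ≤ ∑ _w ∈ F, ENNReal.ofReal (4 * θ * 22 ^ n * r) := Finset.sum_le_sum fun w _ =>
        measure_inter_closedBall_le_of_not_forall_add_le hθ.le hr0 hr1 hupper hthin w
    _ = ENNReal.ofReal (F.card * (4 * θ * 22 ^ n * r)) := by
        rw [Finset.sum_const, nsmul_eq_mul, ENNReal.ofReal_mul (Nat.cast_nonneg _),
          ENNReal.ofReal_natCast]
    _ ≤ ENNReal.ofReal (θ * (4 * θ * 22 ^ n * r)) := by gcongr
    _ = ENNReal.ofReal (4 * θ ^ 2 * 22 ^ n * r) := by ring_nf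

end Band

theorem measure_preimage_Icc_le {n : ℕ} (μ : Measure (Fin (n + 1) → ℝ)) [IsProbabilityMeasure μ]
    {η : (Fin (n + 1) → ℝ) → ℝ} (hη : Monotone η) {τ θ γ lam ξ : ℝ} (hθ : 1 ≤ θ) (hγ : 0 < γ)
    (hlam : 0 < lam)
    (hreg : ∀ x ∈ {x | τ ≤ η x} ∩ measSupport μ, ∀ r : ℝ, r ∈ Ioc (0 : ℝ) 1 →
      (ENNReal.ofReal (θ⁻¹ * r ^ (n + 1)) ≤ μ (closedBall x r) ∧
        μ (closedBall x r) ≤ ENNReal.ofReal (θ * (2 * r) ^ (n + 1))) ∧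
      (closedBall x r ∩ {z | τ + lam * r ^ γ ≤ η z}).Nonempty)
    (hξ : ξ ∈ Ioc (0 : ℝ) 1) :
    μ (η ⁻¹' Icc τ (τ + lam / (44 ^ (n + 1) * θ ^ 2) ^ γ * ξ ^ γ)) ≤ ENNReal.ofReal ξ := by
  obtain ⟨hξ0, hξ1⟩ := hξ
  set C : ℝ := 44 ^ (n + 1) * θ ^ 2
  set r := 2 * ξ / C
  set S := η ⁻¹' Icc τ (τ + lam / C ^ γ * ξ ^ γ)
  have hC : 44 * (22 ^ n * θ ^ 2) ≤ C := by
    simp only [C, pow_succ' (44 : ℝ), ← mul_assoc]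
    gcongr
    norm_num
  have hC1 : 1 ≤ 22 ^ n * θ ^ 2 :=
    one_le_mul_of_one_le_of_one_le (one_le_pow₀ (by norm_num)) (one_le_pow₀ hθ)
  have hC0 : 0 < C := by linarith
  have hr0 : 0 < r := by positivity
  have hr1 : r ≤ 1 := by
    rw [div_le_one hC0]
    linarith
  have hband : τ + lam / C ^ γ * ξ ^ γ < τ + lam * r ^ γ := by
    have h2 : (1 : ℝ) < 2 ^ γ := Real.one_lt_rpow one_lt_two hγ
    have hr : lam * r ^ γ = 2 ^ γ * (lam / C ^ γ * ξ ^ γ) := by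
      rw [Real.div_rpow (by positivity) hC0.le, Real.mul_rpow zero_le_two hξ0.le]
      ring
    rw [hr, add_lt_add_iff_left]
    exact lt_mul_of_one_lt_left (by positivity) h2
  set A := S ∩ measSupport μ
  have hA : ∀ x ∈ A, x ∈ {x | τ ≤ η x} ∩ measSupport μ := fun x hx => ⟨hx.1.1, hx.2⟩
  have hthin : ∀ x ∈ A, ∀ y ∈ A, ¬ ∀ j, x j + r ≤ y j := by
    rintro x hx y ⟨hyS, -⟩ hxy
    obtain ⟨z, hz, hηz⟩ := (hreg x (hA x hx) r ⟨hr0, hr1⟩).2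
    have := hη (le_of_mem_closedBall_of_forall_add_le hz hxy)
    have h1 : η y ≤ τ + lam / C ^ γ * ξ ^ γ := hyS.2
    have h2 : τ + lam * r ^ γ ≤ η z := hηz
    linarith
  have hlower : ∀ x ∈ A, ENNReal.ofReal θ⁻¹ ≤ μ (closedBall x 1) := fun x hx => by
    simpa using (hreg x (hA x hx) 1 ⟨one_pos, le_rfl⟩).1.1
  have hupper : ∀ x ∈ A, μ (closedBall x r) ≤ ENNReal.ofReal (θ * (2 * r) ^ (n + 1)) :=
    fun x hx => (hreg x (hA x hx) r ⟨hr0, hr1⟩).1.2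
  have hfinal : 4 * θ ^ 2 * 22 ^ n * r ≤ ξ := by
    rw [show 4 * θ ^ 2 * 22 ^ n * r = 8 * 22 ^ n * ξ * θ ^ 2 / C by ring, div_le_iff₀ hC0]
    nlinarith [mul_le_mul_of_nonneg_left hC hξ0.le, (by positivity : 0 ≤ ξ * (22 ^ n * θ ^ 2))]
  calc μ S = μ A := by
        rw [measure_inter_conull (measSupport_eq_support μ ▸ Measure.measure_compl_support)]
    _ ≤ ENNReal.ofReal (4 * θ ^ 2 * 22 ^ n * r) := measure_le_of_not_forall_add_le
        (by positivity) hr0 hr1 hlower hupper hthin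
    _ ≤ ENNReal.ofReal ξ := ENNReal.ofReal_le_ofReal hfinal

/-- Proposition 2 (class containment): there exists `C ≥ 1`, depending only on `(d, θ)`, such
that `P_{Mon,d}(σ) ∩ P_{Reg,d}(τ,θ,γ,λ) ⊆ P_{Mon,d}(σ) ∩ P_{Mar,d}(τ, γ, λ/C^γ)`. -/
theorem statement10 (d : ℕ) (hd : 0 < d) (θ : ℝ) (hθ : 1 < θ) :
    ∃ C : ℝ, 1 ≤ C ∧
      ∀ (τ σ γ lam : ℝ), 0 < σ → 0 < γ → 0 < lam →
      ∀ (P : Measure ((Fin d → ℝ) × ℝ)) (η : (Fin d → ℝ) → ℝ),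
        PMon d σ P η ∧ PReg d τ θ γ lam P η →
        PMon d σ P η ∧ PMar d τ γ (lam / C ^ γ) P η := by
  obtain ⟨n, rfl⟩ := Nat.exists_eq_add_one_of_ne_zero hd.ne'
  refine ⟨44 ^ (n + 1) * θ ^ 2, one_le_mul_of_one_le_of_one_le (one_le_pow₀ (by norm_num))
    (one_le_pow₀ hθ.le), ?_⟩
  rintro τ σ γ lam - hγ hlam P η ⟨hMon, -, -, hreg⟩
  have := hMon.1
  have := Measure.isProbabilityMeasure_map (μ := P) measurable_fst.aemeasurable
  exact ⟨hMon, hMon.1, hMon.2.1, fun ξ hξ =>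
    measure_preimage_Icc_le (P.map Prod.fst) hMon.2.2.1 hθ.le hγ hlam hreg hξ⟩
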